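/- The super Schur polynomial satisfies SP_λ(x_1,...,x_m; y_1,...,y_n) = Σ_{μ ⊆ λ} (-1)^{|μ|} s_{λ/μ}(x) s_{μ'}(y), where the sum is over partitions μ contained in λ, s_{λ/μ} is a skew Schur polynomial and μ' is the conjugate of μ. -/

import Mathlib

/-- Complete homogeneous symmetric polynomial, `0` for negative degree. -/
noncomputable def completeHom {R : Type*} [CommRing R] {m : ℕ} (x : Fin m → R) (k : ℤ) : R :=
  if 0 ≤ k then ∑ c ∈ Finset.Nat.antidiagonalTuple m k.toNat, ∏ i, x i ^ c i else 0

/-- Elementary symmetric polynomial, `0` outside `0 ≤ k ≤ n`. -/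
noncomputable def elemSym {R : Type*} [CommRing R] {n : ℕ} (y : Fin n → R) (k : ℤ) : R :=
  if 0 ≤ k then
    ∑ s ∈ (Finset.univ : Finset (Fin n)).powersetCard k.toNat, ∏ j ∈ s, y j
  else 0

/-- The super complete symmetric polynomial
`h_a(x,y) = Σ_{j=0}^n (-1)^j h_{a-j}(x) e_j(y)`. -/
noncomputable def superComplete {R : Type*} [CommRing R] {m n : ℕ} (x : Fin m → R)
    (y : Fin n → R) (a : ℤ) : R :=
  ∑ j ∈ Finset.range (n + 1), (-1 : R) ^ j * completeHom x (a - (j : ℤ)) * elemSym y (j : ℤ)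

/-- The super Schur polynomial `SP_λ(x,y) = det (h_{λ_i - i + j}(x,y))`. -/
noncomputable def superSchur {R : Type*} [CommRing R] {m n L : ℕ} (x : Fin m → R)
    (y : Fin n → R) (lam : Fin L → ℕ) : R :=
  Matrix.det (Matrix.of fun i j : Fin L =>
    superComplete x y ((lam i : ℤ) + (j : ℤ) - (i : ℤ)))

/-- The skew Schur polynomial `s_{λ/μ}(x) = det (h_{λ_i - μ_j - i + j}(x))`. -/
noncomputable def skewSchur {R : Type*} [CommRing R] {m L : ℕ} (x : Fin m → R)
    (lam mu : Fin L → ℕ) : R :=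
  Matrix.det (Matrix.of fun i j : Fin L =>
    completeHom x ((lam i : ℤ) - (mu j : ℤ) + (j : ℤ) - (i : ℤ)))

/-- `s_{μ'}(y)` via the dual Jacobi–Trudy determinant `det (e_{μ_i - i + j}(y))`. -/
noncomputable def conjSchurJT {R : Type*} [CommRing R] {n L : ℕ} (y : Fin n → R)
    (mu : Fin L → ℕ) : R :=
  Matrix.det (Matrix.of fun i j : Fin L =>
    elemSym y ((mu i : ℤ) + (j : ℤ) - (i : ℤ)))

/-!
The super Jacobi–Trudi matrix factors as `A * B` with `A_{ia} = h_{λ_i - i + a - n}(x)` and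
`B_{aj} = (-1)^{a + j + n} e_{j + n - a}(y)`, `a` running over `L + n` columns, because
`h_a(x, y) = Σ_k (-1)^k h_{a - k}(x) e_k(y)`. By Cauchy–Binet, `det (A * B)` is the sum over
increasing column selections `φ` of the products of the two `L × L` minors. Writing
`μ_k = n + k - φ_k`, these minors are `s_{λ/μ}(x)` and `(-1)^{|μ|}` times the dual Jacobi–Trudi
determinant of `μ` in `y`. The selections `φ` correspond exactly to the partitions `μ` with
`μ_k ≤ n + k`; the terms with `μ ⊄ λ` vanish because `s_{λ/μ} = 0`, and those with `μ_k > n + k`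
because a row of the `e`-determinant vanishes.
-/

open Finset Equiv

namespace Matrix

variable {R : Type*} [CommRing R]

theorem det_mul_eq_sum_prod_mul_det_submatrix {ι κ : Type*} [Fintype ι] [DecidableEq ι]
    [Fintype κ] (A : Matrix ι κ R) (B : Matrix κ ι R) :
    (A * B).det = ∑ p : ι → κ, (∏ i, B (p i) i) * (A.submatrix id p).det := by
  simp only [det_apply', mul_apply, prod_univ_sum, mul_sum, Fintype.piFinset_univ]
  rw [sum_comm]
  refine sum_congr rfl fun p _ => sum_congr rfl fun σ _ => ?_
  simp only [submatrix_apply, id_eq, prod_mul_distrib]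
  ring

theorem det_eq_zero_of_lowerLeft_eq_zero {L : ℕ} (M : Matrix (Fin L) (Fin L) R) (k : Fin L)
    (h : ∀ i j, k ≤ i → j ≤ k → M i j = 0) : M.det = 0 := by
  rw [det_apply']
  refine sum_eq_zero fun σ _ => ?_
  -- `σ` cannot map the `k + 1` indices `≤ k` into the `k` indices `< k`
  obtain ⟨j, hj, hσj⟩ : ∃ j ≤ k, k ≤ σ j := by
    by_contra! hσ
    obtain ⟨a, -, b, -, hab, he⟩ := exists_ne_map_eq_of_card_lt_of_maps_to (s := Iic k)
      (t := Iio k) (by simp) (f := σ) fun a ha => mem_Iio.mpr (hσ a (mem_Iic.mp ha))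
    exact hab (σ.injective he)
  rw [prod_eq_zero (f := fun i => M (σ i) i) (mem_univ j) (h _ _ hσj hj), mul_zero]

variable {L : ℕ} {κ : Type*} [Fintype κ] [LinearOrder κ]

open scoped Classical in
theorem sum_injective_eq_sum_strictMono_sum_perm {M : Type*} [AddCommMonoid M]
    (f : (Fin L → κ) → M) :
    ∑ p : Fin L → κ with Function.Injective p, f p =
      ∑ φ : Fin L → κ with StrictMono φ, ∑ σ : Perm (Fin L), f (φ ∘ σ) := by
  rw [← sum_product']
  refine (sum_nbij (fun φσ : (Fin L → κ) × Perm (Fin L) => φσ.1 ∘ φσ.2) ?_ ?_ ?_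
    fun _ _ => rfl).symm
  · simp only [mem_product, mem_filter_univ, mem_univ, and_true]
    exact fun φσ hφ => hφ.injective.comp φσ.2.injective
  · rintro ⟨φ, σ⟩ hφ ⟨ψ, τ⟩ hψ (h : φ ∘ σ = ψ ∘ τ)
    simp only [mem_coe, mem_product, mem_filter_univ, mem_univ, and_true] at hφ hψ
    have hφψ : φ = ψ := by
      rw [← hφ.range_inj hψ, ← σ.surjective.range_comp, h, τ.surjective.range_comp]
    subst hφψ
    simp only [Prod.mk.injEq, true_and]
    exact Equiv.ext fun k => hφ.injective (congrFun h k)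
  · intro p hp
    simp only [mem_coe, mem_filter_univ] at hp
    have hcard : (univ.image p).card = L := by simp [card_image_of_injective _ hp]
    set φ := (univ.image p).orderEmbOfFin hcard
    have hrange : ∀ k, ∃ l, φ l = p k := fun k => by
      rw [← Set.mem_range, range_orderEmbOfFin]; simp
    choose σ hσ using hrange
    have hσinj : Function.Injective σ := fun k l h => hp (by rw [← hσ, ← hσ, h])
    refine ⟨(φ, Equiv.ofBijective σ (Finite.injective_iff_bijective.mp hσinj)), ?_, ?_⟩
    · simp [φ.strictMono]
    · exact funext hσ

open scoped Classical in
theorem det_mul_eq_sum_strictMono (A : Matrix (Fin L) κ R) (B : Matrix κ (Fin L) R) :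
    (A * B).det =
      ∑ φ : Fin L → κ with StrictMono φ, (A.submatrix id φ).det * (B.submatrix φ id).det := by
  rw [det_mul_eq_sum_prod_mul_det_submatrix, ← sum_filter_of_ne (p := Function.Injective)
    fun p _ hp => by_contra fun hinj => ?_, sum_injective_eq_sum_strictMono_sum_perm]
  · refine sum_congr rfl fun φ _ => ?_
    simp_rw [det_apply' (B.submatrix φ id), mul_sum]
    refine sum_congr rfl fun σ _ => ?_
    rw [show A.submatrix id (φ ∘ σ) = (A.submatrix id φ).submatrix id σ from rfl, det_permute']
    simp only [Function.comp_apply, submatrix_apply, id_eq]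
    ring
  · obtain ⟨i, j, hpij, hij⟩ : ∃ i j, p i = p j ∧ i ≠ j := by
      simpa [Function.Injective] using hinj
    exact hp (by rw [det_zero_of_column_eq hij (fun k => by simp [hpij]), mul_zero])

end Matrix

section SuperSchur

variable {R : Type*} [CommRing R]

theorem completeHom_of_neg {m : ℕ} (x : Fin m → R) {k : ℤ} (hk : k < 0) :
    completeHom x k = 0 := by
  simp [completeHom, hk]

theorem elemSym_of_neg {n : ℕ} (y : Fin n → R) {k : ℤ} (hk : k < 0) : elemSym y k = 0 := by
  simp [elemSym, hk]

theorem elemSym_of_lt {n : ℕ} (y : Fin n → R) {k : ℤ} (hk : n < k) : elemSym y k = 0 := by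
  rw [elemSym, if_pos (by omega), powersetCard_eq_empty.mpr (by simp; omega), sum_empty]

noncomputable def completeHomMatrix {m L : ℕ} (n : ℕ) (x : Fin m → R) (lam : Fin L → ℕ) :
    Matrix (Fin L) (Fin (L + n)) R :=
  Matrix.of fun i a => completeHom x ((lam i : ℤ) - i + a - n)

noncomputable def signedElemSymMatrix {n : ℕ} (L : ℕ) (y : Fin n → R) :
    Matrix (Fin (L + n)) (Fin L) R :=
  Matrix.of fun a j => (-1 : R) ^ ((a : ℕ) + j + n) * elemSym y ((j : ℤ) + n - a)

theorem superComplete_eq_sum {m n L : ℕ} (x : Fin m → R) (y : Fin n → R) (lam : Fin L → ℕ)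
    (i j : Fin L) :
    superComplete x y ((lam i : ℤ) + j - i) =
      ∑ a, completeHomMatrix n x lam i a * signedElemSymMatrix L y a j := by
  rw [superComplete]
  -- the summation index `k` of `superComplete` corresponds to the column `a = j + n - k`
  refine sum_of_injOn (fun k => (⟨j + n - k, by omega⟩ : Fin (L + n))) ?_ (by simp) ?_ ?_
  · intro k hk l hl h
    simp only [coe_range, Set.mem_Iio, Fin.mk.injEq] at hk hl h
    omega
  · intro a _ ha
    simp only [coe_range, Set.mem_image, Set.mem_Iio, not_exists, not_and] at ha
    have hout : (a : ℕ) < j ∨ (j : ℕ) + n < a := by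
      by_contra! h
      exact ha (j + n - a) (by omega) (Fin.ext (by simp; omega))
    rw [signedElemSymMatrix, Matrix.of_apply]
    rcases hout with h | h
    · rw [elemSym_of_lt y (by omega), mul_zero, mul_zero]
    · rw [elemSym_of_neg y (by omega), mul_zero, mul_zero]
  · intro k hk
    simp only [mem_range] at hk
    simp only [completeHomMatrix, signedElemSymMatrix, Matrix.of_apply]
    have hsign : (j : ℕ) + n - k + j + n = k + 2 * ((j : ℕ) + n - k) := by omega
    rw [hsign, pow_add, pow_mul, neg_one_sq, one_pow, mul_one]
    push_cast [show k ≤ (j : ℕ) + n by omega]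
    rw [show (lam i : ℤ) - i + (j + n - k) - n = lam i + j - i - k by ring,
      show (j : ℤ) + n - (j + n - k) = k by ring]
    ring

theorem superSchur_eq_det_mul {m n L : ℕ} (x : Fin m → R) (y : Fin n → R) (lam : Fin L → ℕ) :
    superSchur x y lam = (completeHomMatrix n x lam * signedElemSymMatrix L y).det := by
  rw [superSchur]
  congr 1
  ext i j
  rw [Matrix.mul_apply, Matrix.of_apply, superComplete_eq_sum]

end SuperSchur

theorem Fin.val_add_le_val_add_of_strictMono {L N : ℕ} {f : Fin L → Fin N} (hf : StrictMono f)
    {i j : Fin L} (hij : i ≤ j) : (f i : ℕ) + j ≤ f j + i := by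
  have hcard := card_le_card_of_injOn f
    (fun a ha => by
      simp only [coe_Icc, Set.mem_Icc] at ha ⊢
      exact ⟨hf.monotone ha.1, hf.monotone ha.2⟩)
    hf.injective.injOn (s := Icc i j) (t := Icc (f i) (f j))
  simp only [Fin.card_Icc] at hcard
  omega

section Shapes

open Matrix

variable {R : Type*} [CommRing R] {L n : ℕ}

def columnShape (n : ℕ) (φ : Fin L → Fin (L + n)) : Fin L → ℕ :=
  fun k => n + k - φ k

theorem Fin.val_le_add_of_strictMono {φ : Fin L → Fin (L + n)} (hφ : StrictMono φ) (k : Fin L) :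
    (φ k : ℕ) ≤ n + k := by
  have := k.isLt
  have hlast := Fin.val_add_le_val_add_of_strictMono hφ
    (show k ≤ ⟨L - 1, by omega⟩ from Fin.mk_le_mk.mpr (by omega))
  have := (φ ⟨L - 1, by omega⟩).isLt
  simp only at hlast
  omega

theorem antitone_columnShape {φ : Fin L → Fin (L + n)} (hφ : StrictMono φ) :
    Antitone (columnShape n φ) := fun i j hij => by
  have := Fin.val_add_le_val_add_of_strictMono hφ hij
  simp only [columnShape]
  omega

theorem det_completeHomMatrix_submatrix {m : ℕ} (x : Fin m → R) (lam : Fin L → ℕ)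
    {φ : Fin L → Fin (L + n)} (hφ : StrictMono φ) :
    ((completeHomMatrix n x lam).submatrix id φ).det = skewSchur x lam (columnShape n φ) := by
  rw [skewSchur]
  congr 1
  ext i j
  have := Fin.val_le_add_of_strictMono hφ j
  simp only [submatrix_apply, completeHomMatrix, columnShape, of_apply, id_eq]
  congr 1
  push_cast [Nat.cast_sub this]
  ring

theorem det_signedElemSymMatrix_submatrix (y : Fin n → R) {φ : Fin L → Fin (L + n)}
    (hφ : StrictMono φ) :
    ((signedElemSymMatrix L y).submatrix φ id).det =
      (-1 : R) ^ (∑ k, columnShape n φ k) * conjSchurJT y (columnShape n φ) := by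
  have hφle := Fin.val_le_add_of_strictMono hφ
  have hentries : (signedElemSymMatrix L y).submatrix φ id =
      diagonal (fun i => (-1 : R) ^ (φ i : ℕ)) *
        of (fun i j : Fin L => elemSym y ((columnShape n φ i : ℤ) + j - i)) *
        diagonal (fun j : Fin L => (-1 : R) ^ ((j : ℕ) + n)) := by
    ext i j
    have := hφle i
    simp only [submatrix_apply, signedElemSymMatrix, of_apply, id_eq, diagonal_mul,
      mul_diagonal]
    rw [show ((columnShape n φ i : ℕ) : ℤ) + j - i = j + n - φ i by
      simp only [columnShape]; push_cast [Nat.cast_sub this]; ring]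
    ring
  have hparity : ∑ j : Fin L, ((j : ℕ) + n) + ∑ k, (φ k : ℕ) =
      ∑ k, columnShape n φ k + 2 * ∑ k, (φ k : ℕ) := by
    have hshape : ∑ j : Fin L, ((j : ℕ) + n) = ∑ k, (columnShape n φ k + φ k) :=
      sum_congr rfl fun k _ => by have := hφle k; simp only [columnShape]; omega
    rw [hshape, sum_add_distrib]
    ring
  rw [hentries, det_mul, det_mul, det_diagonal, det_diagonal, ← conjSchurJT, prod_pow_eq_pow_sum,
    prod_pow_eq_pow_sum, mul_right_comm, ← pow_add, add_comm, hparity, pow_add, pow_mul,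
    neg_one_sq, one_pow, mul_one]

end Shapes

section Expansion

open Matrix

variable {R : Type*} [CommRing R] {L n : ℕ}

theorem skewSchur_eq_zero_of_lt {m : ℕ} (x : Fin m → R) {lam mu : Fin L → ℕ}
    (hlam : Antitone lam) (hmu : Antitone mu) {k : Fin L} (hk : lam k < mu k) :
    skewSchur x lam mu = 0 :=
  det_eq_zero_of_lowerLeft_eq_zero _ k fun i j hki hjk => by
    have := hlam hki
    have := hmu hjk
    have : (j : ℕ) ≤ i := hjk.trans hki
    exact completeHom_of_neg x (by omega)

theorem conjSchurJT_eq_zero_of_lt (y : Fin n → R) {mu : Fin L → ℕ} {k : Fin L}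
    (hk : n + k < mu k) : conjSchurJT y mu = 0 :=
  det_eq_zero_of_row_eq_zero k fun j => elemSym_of_lt y (by omega)

open scoped Classical in
theorem sum_strictMono_columnShape_eq {M : Type*} [AddCommMonoid M]
    (lam : Fin L → ℕ) (F : (Fin L → ℕ) → M)
    (hF : ∀ μ, Antitone μ → ∀ k, lam k < μ k ∨ n + k < μ k → F μ = 0) :
    ∑ φ : Fin L → Fin (L + n) with StrictMono φ, F (columnShape n φ) =
      ∑ g ∈ univ.filter (fun g : (i : Fin L) → Fin (lam i + 1) =>
          ∀ i j : Fin L, i ≤ j → (g j : ℕ) ≤ (g i : ℕ)), F (fun i => g i) := by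
  have hF' : ∀ μ, Antitone μ → F μ ≠ 0 → ∀ k, μ k ≤ lam k ∧ μ k ≤ n + k := fun μ hμ h k => by
    by_contra! hk
    exact h (hF μ hμ k (by omega))
  refine sum_bij_ne_zero (fun φ hφ hφ0 k => ⟨columnShape n φ k, ?_⟩) ?_ ?_ ?_ fun _ _ _ => rfl
  · rw [mem_filter_univ] at hφ
    exact Nat.lt_succ_of_le (hF' _ (antitone_columnShape hφ) hφ0 k).1
  · intro φ hφ _
    rw [mem_filter_univ] at hφ ⊢
    exact fun i j hij => antitone_columnShape hφ hij
  · intro φ hφ _ ψ hψ _ h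
    rw [mem_filter_univ] at hφ hψ
    funext k
    have hk := congrArg (fun g => (g k : ℕ)) h
    have := Fin.val_le_add_of_strictMono hφ k
    have := Fin.val_le_add_of_strictMono hψ k
    simp only [columnShape] at hk
    exact Fin.ext (by omega)
  · intro g hg hg0
    rw [mem_filter_univ] at hg
    have hgle := hF' _ (fun i j hij => hg i j hij) hg0
    have hφ : StrictMono fun k : Fin L => (⟨n + k - g k, by omega⟩ : Fin (L + n)) :=
      fun i j hij => by
        have := hg i j hij.le
        have := (hgle i).2
        simp only [Fin.mk_lt_mk]
        omega
    have hshape : columnShape n (fun k : Fin L => (⟨n + k - g k, by omega⟩ : Fin (L + n))) =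
        fun k => (g k : ℕ) := funext fun k => by have := (hgle k).2; simp only [columnShape]; omega
    refine ⟨_, (mem_filter_univ _).mpr hφ, hshape ▸ hg0, ?_⟩
    funext k
    exact Fin.ext (congrFun hshape k)

end Expansion

/-- `SP_λ(x,y) = Σ_{μ ⊆ λ} (-1)^{|μ|} s_{λ/μ}(x) s_{μ'}(y)`, the sum being
over partitions `μ` contained in `λ` (encoded as antitone tuples `g` with `g i ≤ λ i`). -/
theorem statement12 {R : Type*} [CommRing R] (m n L : ℕ) (x : Fin m → R) (y : Fin n → R)
    (lam : Fin L → ℕ) (hanti : Antitone lam) :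
    superSchur x y lam =
      ∑ g ∈ Finset.univ.filter (fun g : (i : Fin L) → Fin (lam i + 1) =>
          ∀ i j : Fin L, i ≤ j → (g j : ℕ) ≤ (g i : ℕ)),
        (-1 : R) ^ (∑ i, (g i : ℕ)) *
          skewSchur x lam (fun i => (g i : ℕ)) *
          conjSchurJT y (fun i => (g i : ℕ)) := by
  classical
  calc superSchur x y lam
      = ∑ φ : Fin L → Fin (L + n) with StrictMono φ, (-1 : R) ^ (∑ k, columnShape n φ k) *
          skewSchur x lam (columnShape n φ) * conjSchurJT y (columnShape n φ) := by
        rw [superSchur_eq_det_mul, Matrix.det_mul_eq_sum_strictMono]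
        refine sum_congr rfl fun φ hφ => ?_
        rw [mem_filter_univ] at hφ
        rw [det_completeHomMatrix_submatrix x lam hφ, det_signedElemSymMatrix_submatrix y hφ]
        ring
    _ = _ := by
        refine sum_strictMono_columnShape_eq lam
          (fun μ => (-1 : R) ^ (∑ k, μ k) * skewSchur x lam μ * conjSchurJT y μ)
          fun μ hμ k hk => ?_
        rcases hk with hk | hk
        · rw [skewSchur_eq_zero_of_lt x hanti hμ hk, mul_zero, zero_mul]
        · rw [conjSchurJT_eq_zero_of_lt y hk, mul_zero]
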